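/- Let M be a C*-algebra, (I, ‖·‖_I) a complex normed ideal in M with a unitarily invariant norm, X, Y ∈ M_h, and T ∈ I. Then ‖sin(X) T cos(Y) − cos(X) T sin(Y)‖_I ≤ ‖X T − T Y‖_I. In particular, ‖sin(X) T‖_I ≤ ‖X T‖_I for every X ∈ M_h and T ∈ I. -/

import Mathlib

/-!
Write `D = L_X - R_Y` for the derivation `T ↦ X T - T Y` acting on the ideal. Since `L` and `R`
commute, `sin X · T · cos Y - cos X · T · sin Y = sin(D) T` by the subtraction formula. For real
`t`, `exp(i t D) T = e^{itX} T e^{-itY}` is a product with unitaries, so `exp(i t D)` and hence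
`cos(t D)` are contractions. Then `t ↦ sin(t D) T` has derivative `cos(t D) (D T)`, of norm at
most `‖D T‖`, and the mean value inequality on `[0, 1]` gives `‖sin(D) T‖ ≤ ‖D T‖`.
The second claim is the case `Y = 0`.
-/

/-- Evaluation of an entire function `F : ℂ → ℂ` at an element `A` of a complex Banach
algebra, obtained by evaluating the power (Taylor) series of `F` at `A`. -/
noncomputable def opEval {B : Type*} [NormedRing B] [NormedAlgebra ℂ B]
    (F : ℂ → ℂ) (A : B) : B :=
  ∑' n : ℕ, (iteratedDeriv n F 0 / (n.factorial : ℂ)) • A ^ n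

/-- A normed ideal `(I, ‖·‖_I)` in a C⋆-algebra `M` with a unitarily invariant norm: the
completion `I` of a two-sided ideal `I₀ ⊆ M` endowed with a norm satisfying
`‖X Y Z‖_I ≤ ‖X‖ ‖Y‖_I ‖Z‖` for `X, Z ∈ M`, `Y ∈ I₀`.  It is presented here as a complex
Banach space `I` together with the extensions to `I` of the left and right multiplication
operators `L X : T ↦ X * T` and `R X : T ↦ T * X`, which satisfy the corresponding norm
inequalities `‖L X T‖_I ≤ ‖X‖ * ‖T‖_I` and `‖R X T‖_I ≤ ‖X‖ * ‖T‖_I` (in particular the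
norm of `I` is unitarily invariant). -/
structure NormedIdeal (M : Type*) [CStarAlgebra M] (I : Type*)
    [NormedAddCommGroup I] [NormedSpace ℂ I] [CompleteSpace I] where
  /-- The extension to `I` of the left multiplication representation `L X : T ↦ X * T`. -/
  L : M →ₐ[ℂ] (I →L[ℂ] I)
  /-- The extension to `I` of the right multiplication `R X : T ↦ T * X`. -/
  R : M →ₗ[ℂ] (I →L[ℂ] I)
  R_one : R 1 = 1
  R_mul : ∀ x y : M, R (x * y) = R y * R x
  L_R_comm : ∀ x y : M, L x * R y = R y * L x
  norm_L_le : ∀ (x : M) (T : I), ‖L x T‖ ≤ ‖x‖ * ‖T‖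
  norm_R_le : ∀ (x : M) (T : I), ‖R x T‖ ≤ ‖x‖ * ‖T‖

open NormedSpace Complex

lemma iteratedDeriv_sin_cos_zero (n : ℕ) :
    iteratedDeriv n sin 0 = (I ^ n - (-I) ^ n) / (2 * I) ∧
      iteratedDeriv n cos 0 = (I ^ n + (-I) ^ n) / 2 := by
  induction n with
  | zero => simp
  | succ n ih =>
    simp only [iteratedDeriv_add_one_sin, iteratedDeriv_add_one_cos, Pi.neg_apply, ih.1, ih.2,
      pow_succ]
    constructor
    · field_simp
      ring
    · field_simp
      linear_combination ((-I) ^ n - I ^ n) * I_sq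

section BanachAlgebra

variable {𝔸 : Type*} [NormedRing 𝔸] [NormedAlgebra ℂ 𝔸]

lemma opEval_zero (F : ℂ → ℂ) : opEval F (0 : 𝔸) = F 0 • 1 := by
  rw [opEval, tsum_eq_single 0 fun n hn => by simp [zero_pow hn]]
  simp

variable [CompleteSpace 𝔸]

lemma hasSum_exp_smul (c : ℂ) (a : 𝔸) :
    HasSum (fun n : ℕ => (c ^ n / (n.factorial : ℂ)) • a ^ n) (exp (c • a)) := by
  convert exp_series_hasSum_exp' (𝕂 := ℂ) (c • a) using 2 with n
  rw [smul_pow, smul_smul, div_eq_inv_mul]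

lemma opEval_sin_eq_exp (a : 𝔸) :
    opEval sin a = (2 * I)⁻¹ • (exp (I • a) - exp ((-I) • a)) := by
  refine ((((hasSum_exp_smul I a).sub (hasSum_exp_smul (-I) a)).const_smul
    (2 * I)⁻¹).congr_fun fun n => ?_).tsum_eq
  rw [(iteratedDeriv_sin_cos_zero n).1, ← sub_smul, smul_smul]
  congr 1
  ring

lemma opEval_cos_eq_exp (a : 𝔸) :
    opEval cos a = (2 : ℂ)⁻¹ • (exp (I • a) + exp ((-I) • a)) := by
  refine ((((hasSum_exp_smul I a).add (hasSum_exp_smul (-I) a)).const_smul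
    (2 : ℂ)⁻¹).congr_fun fun n => ?_).tsum_eq
  rw [(iteratedDeriv_sin_cos_zero n).2, ← add_smul, smul_smul]
  congr 1
  ring

lemma opEval_sin_sub_of_commute {a b : 𝔸} (h : Commute a b) :
    opEval sin (a - b) = opEval sin a * opEval cos b - opEval cos a * opEval sin b := by
  let +nondep : NormedAlgebra ℚ 𝔸 := .restrictScalars ℚ ℂ 𝔸
  have h₁ : exp (I • (a - b)) = exp (I • a) * exp ((-I) • b) := by
    rw [← exp_add_of_commute ((h.smul_left I).smul_right (-I))]
    congr 1
    module
  have h₂ : exp ((-I) • (a - b)) = exp ((-I) • a) * exp (I • b) := by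
    rw [← exp_add_of_commute ((h.smul_left (-I)).smul_right I)]
    congr 1
    module
  rw [opEval_sin_eq_exp, h₁, h₂]
  simp only [opEval_sin_eq_exp, opEval_cos_eq_exp, smul_mul_smul_comm, sub_mul, mul_sub,
    add_mul, mul_add, smul_sub]
  match_scalars <;> field_simp <;> ring

variable {𝔹 F : Type*} [NormedRing 𝔹] [NormedAlgebra ℂ 𝔹] [FunLike F 𝔸 𝔹]
  [LinearMapClass F ℂ 𝔸 𝔹]

lemma map_exp_of_map_pow (φ : F) (hφ : Continuous φ) {a : 𝔸}
    (h : ∀ n : ℕ, φ (a ^ n) = φ a ^ n) : φ (exp a) = exp (φ a) := by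
  rw [exp_eq_tsum ℂ, exp_eq_tsum ℂ, (expSeries_summable' a).map_tsum φ hφ]
  simp only [map_smul, h]

lemma map_exp_smul_of_map_pow (φ : F) (hφ : Continuous φ) {a : 𝔸}
    (h : ∀ n : ℕ, φ (a ^ n) = φ a ^ n) (c : ℂ) : φ (exp (c • a)) = exp (c • φ a) := by
  rw [map_exp_of_map_pow φ hφ fun n => by rw [smul_pow, map_smul, h, map_smul, smul_pow],
    map_smul]

variable [CompleteSpace 𝔹]

lemma map_opEval_sin_of_map_pow (φ : F) (hφ : Continuous φ) {a : 𝔸}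
    (h : ∀ n : ℕ, φ (a ^ n) = φ a ^ n) : φ (opEval sin a) = opEval sin (φ a) := by
  simp only [opEval_sin_eq_exp, map_smul, map_sub, map_exp_smul_of_map_pow φ hφ h]

lemma map_opEval_cos_of_map_pow (φ : F) (hφ : Continuous φ) {a : 𝔸}
    (h : ∀ n : ℕ, φ (a ^ n) = φ a ^ n) : φ (opEval cos a) = opEval cos (φ a) := by
  simp only [opEval_cos_eq_exp, map_smul, map_add, map_exp_smul_of_map_pow φ hφ h]

end BanachAlgebra

theorem norm_opEval_sin_apply_le {E : Type*} [NormedAddCommGroup E] [NormedSpace ℂ E]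
    [CompleteSpace E] (D : E →L[ℂ] E) (hD : ∀ t : ℝ, ‖exp ((t : ℂ) • (I • D))‖ ≤ 1) (T : E) :
    ‖opEval sin D T‖ ≤ ‖D T‖ := by
  set A := I • D
  have hD' : ∀ t : ℝ, ‖exp ((t : ℂ) • -A)‖ ≤ 1 := fun t => by
    simpa only [ofReal_neg, neg_smul, smul_neg] using hD (-t)
  -- `f z = sin (z D) T` and `f' z = cos (z D) (D T)`, written through exponentials
  set f : ℂ → E := fun z => (2 * I)⁻¹ • (exp (z • A) T - exp (z • -A) T)
  set f' : ℂ → E := fun z => (2 : ℂ)⁻¹ • (exp (z • A) (D T) + exp (z • -A) (D T))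
  have hf : ∀ z, HasDerivAt f (f' z) z := fun z => by
    refine ((((hasDerivAt_exp_smul_const A z).clm_apply (hasDerivAt_const z T)).sub
      ((hasDerivAt_exp_smul_const (-A) z).clm_apply (hasDerivAt_const z T))).const_smul
      (2 * I)⁻¹).congr_deriv ?_
    simp [f', A, smul_smul, mul_comm I, mul_assoc]
  have hf'_le : ∀ t : ℝ, ‖f' t‖ ≤ ‖D T‖ := fun t => by
    calc ‖f' t‖ ≤ 2⁻¹ * (‖exp ((t : ℂ) • A)‖ * ‖D T‖ + ‖exp ((t : ℂ) • -A)‖ * ‖D T‖) := by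
          rw [norm_smul, norm_inv, Complex.norm_ofNat]
          gcongr
          exact (norm_add_le _ _).trans
            (add_le_add (ContinuousLinearMap.le_opNorm _ _) (ContinuousLinearMap.le_opNorm _ _))
      _ ≤ 2⁻¹ * (1 * ‖D T‖ + 1 * ‖D T‖) := by gcongr; exacts [hD t, hD' t]
      _ = ‖D T‖ := by ring
  -- `E` is only a complex space, so the mean value inequality is applied along `ℝ ⊆ ℂ`
  have hconvex : Convex ℝ (Set.range ((↑) : ℝ → ℂ)) := by
    simpa using convex_univ.linear_image ofRealCLM.toLinearMap
  have h := hconvex.norm_image_sub_le_of_norm_hasDerivWithin_le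
    (fun z _ => (hf z).hasDerivWithinAt) (by rintro _ ⟨t, rfl⟩; exact hf'_le t)
    ⟨0, ofReal_zero⟩ ⟨1, ofReal_one⟩
  simpa [f, A, opEval_sin_eq_exp] using h

lemma CStarRing.norm_le_one_of_mem_unitary {A : Type*} [NormedRing A] [StarRing A] [CStarRing A]
    {U : A} (hU : U ∈ unitary A) : ‖U‖ ≤ 1 := by
  nontriviality A
  exact (CStarRing.norm_of_mem_unitary hU).le

namespace NormedIdeal

variable {M E : Type*} [CStarAlgebra M] [NormedAddCommGroup E] [NormedSpace ℂ E] [CompleteSpace E]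
  (rep : NormedIdeal M E)

lemma opNorm_L_le (x : M) : ‖rep.L x‖ ≤ ‖x‖ :=
  ContinuousLinearMap.opNorm_le_bound _ (norm_nonneg x) (rep.norm_L_le x)

lemma opNorm_R_le (x : M) : ‖rep.R x‖ ≤ ‖x‖ :=
  ContinuousLinearMap.opNorm_le_bound _ (norm_nonneg x) (rep.norm_R_le x)

lemma continuous_L : Continuous rep.L :=
  AddMonoidHomClass.continuous_of_bound rep.L 1 fun x => by simpa using rep.opNorm_L_le x

lemma continuous_R : Continuous rep.R :=
  AddMonoidHomClass.continuous_of_bound rep.R 1 fun x => by simpa using rep.opNorm_R_le x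

lemma R_pow (y : M) (n : ℕ) : rep.R (y ^ n) = rep.R y ^ n := by
  induction n with
  | zero => simpa using rep.R_one
  | succ n ih => rw [pow_succ, rep.R_mul, ih, ← pow_succ']

lemma L_exp (x : M) : rep.L (exp x) = exp (rep.L x) :=
  map_exp_of_map_pow rep.L rep.continuous_L (map_pow rep.L x)

lemma R_exp (y : M) : rep.R (exp y) = exp (rep.R y) :=
  map_exp_of_map_pow rep.R rep.continuous_R (rep.R_pow y)

lemma norm_exp_smul_I_smul_sub_le_one {X Y : M} (hX : IsSelfAdjoint X) (hY : IsSelfAdjoint Y)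
    (t : ℝ) : ‖exp ((t : ℂ) • (I • (rep.L X - rep.R Y)))‖ ≤ 1 := by
  let +nondep : NormedAlgebra ℚ M := .restrictScalars ℚ ℂ M
  let +nondep : NormedAlgebra ℚ (E →L[ℂ] E) := .restrictScalars ℚ ℂ (E →L[ℂ] E)
  have htI : (t : ℂ) * I ∈ skewAdjoint ℂ := by simp [skewAdjoint.mem_iff]
  have hu : exp (((t : ℂ) * I) • X) ∈ unitary M :=
    exp_mem_unitary_of_mem_skewAdjoint (hX.smul_mem_skewAdjoint htI)
  have hv : exp ((-((t : ℂ) * I)) • Y) ∈ unitary M :=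
    exp_mem_unitary_of_mem_skewAdjoint (hY.smul_mem_skewAdjoint (neg_mem htI))
  have hsplit : (t : ℂ) • (I • (rep.L X - rep.R Y)) =
      rep.L (((t : ℂ) * I) • X) + rep.R ((-((t : ℂ) * I)) • Y) := by
    rw [map_smul, map_smul, smul_smul, neg_smul, smul_sub, sub_eq_add_neg]
  rw [hsplit, exp_add_of_commute (rep.L_R_comm _ _), ← rep.L_exp, ← rep.R_exp]
  calc _ ≤ ‖rep.L (exp (((t : ℂ) * I) • X))‖ * ‖rep.R (exp ((-((t : ℂ) * I)) • Y))‖ :=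
        norm_mul_le _ _
    _ ≤ 1 * 1 := by
      gcongr
      exacts [(rep.opNorm_L_le _).trans (CStarRing.norm_le_one_of_mem_unitary hu),
        (rep.opNorm_R_le _).trans (CStarRing.norm_le_one_of_mem_unitary hv)]
    _ = 1 := one_mul 1

theorem norm_sin_cos_sub_cos_sin_apply_le {X Y : M} (hX : IsSelfAdjoint X)
    (hY : IsSelfAdjoint Y) (T : E) :
    ‖rep.L (opEval sin X) (rep.R (opEval cos Y) T) -
        rep.L (opEval cos X) (rep.R (opEval sin Y) T)‖ ≤ ‖rep.L X T - rep.R Y T‖ := by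
  have h := norm_opEval_sin_apply_le _ (rep.norm_exp_smul_I_smul_sub_le_one hX hY) T
  rwa [opEval_sin_sub_of_commute (rep.L_R_comm X Y),
    ← map_opEval_sin_of_map_pow rep.L rep.continuous_L (map_pow rep.L X),
    ← map_opEval_cos_of_map_pow rep.L rep.continuous_L (map_pow rep.L X),
    ← map_opEval_sin_of_map_pow rep.R rep.continuous_R (rep.R_pow Y),
    ← map_opEval_cos_of_map_pow rep.R rep.continuous_R (rep.R_pow Y)] at h

end NormedIdeal

/-- Let `M` be a C⋆-algebra, `(I, ‖·‖_I)` a complex normed ideal in `M`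
with a unitarily invariant norm, `X, Y ∈ M` self-adjoint and `T ∈ I`.  Then
`‖sin X · T · cos Y - cos X · T · sin Y‖_I ≤ ‖X T - T Y‖_I`; in particular
`‖sin X · T‖_I ≤ ‖X T‖_I` for every self-adjoint `X` and every `T ∈ I`.  (Here `sin` and
`cos` of an element of `M` are given by their everywhere-convergent power series.) -/
theorem statement17 {M I : Type*} [CStarAlgebra M]
    [NormedAddCommGroup I] [NormedSpace ℂ I] [CompleteSpace I]
    (rep : NormedIdeal M I) (X Y : M) (hX : IsSelfAdjoint X) (hY : IsSelfAdjoint Y) (T : I) :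
    (‖rep.L (opEval Complex.sin X) (rep.R (opEval Complex.cos Y) T) -
        rep.L (opEval Complex.cos X) (rep.R (opEval Complex.sin Y) T)‖ ≤
      ‖rep.L X T - rep.R Y T‖) ∧
    (∀ (X' : M), IsSelfAdjoint X' → ∀ T' : I,
      ‖rep.L (opEval Complex.sin X') T'‖ ≤ ‖rep.L X' T'‖) := by
  refine ⟨rep.norm_sin_cos_sub_cos_sin_apply_le hX hY T, fun X' hX' T' => ?_⟩
  simpa [opEval_zero, rep.R_one] using
    rep.norm_sin_cos_sub_cos_sin_apply_le hX' (IsSelfAdjoint.zero M) T'
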